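/- arXiv:0807.2682 — 5 statements merged into one kernel-verified Lean document; each statement's English description precedes it below -/
import Mathlib

section
/- For 0 < q < 1, the q-Euler polynomial E_{m,q}^{(-m,1)}(x) satisfies [2]_q(1-q)^{-m} Σ_{j=0}^m binom(m,j)(-1)^j q^{jx}/(1+q^{j-m}) = Σ_{i=0}^m binom(m,i) q^{x i} e_i [x]_q^{m-i}, where e_i := [2]_q (1-q)^{-i} Σ_{j=0}^i binom(i,j)(-1)^j/(1+q^{j-m}). -/
open Finset

private lemma choose_sum_aux (t : ℝ) {m j : ℕ} (hj : j ≤ m) :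
    ∑ i ∈ Finset.range (m + 1), (m.choose i : ℝ) * (i.choose j : ℝ) * (t ^ i * (1 - t) ^ (m - i))
      = (m.choose j : ℝ) * t ^ j := by
  have h1 : ∑ i ∈ Finset.range (m + 1),
      (m.choose i : ℝ) * (i.choose j : ℝ) * (t ^ i * (1 - t) ^ (m - i))
      = ∑ i ∈ Finset.Ico j (m + 1),
      (m.choose i : ℝ) * (i.choose j : ℝ) * (t ^ i * (1 - t) ^ (m - i)) := by
    refine (Finset.sum_subset ?_ ?_).symm
    · rw [Finset.range_eq_Ico]
      exact Finset.Ico_subset_Ico (Nat.zero_le _) le_rfl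
    · intro i hi hni
      have : i < j := by
        simp only [Finset.mem_range, Finset.mem_Ico] at hi hni
        omega
      rw [Nat.choose_eq_zero_of_lt this]
      simp
  rw [h1, Finset.sum_Ico_eq_sum_range]
  have hmj : m + 1 - j = (m - j) + 1 := by omega
  rw [hmj]
  have h2 : ∀ k ∈ Finset.range ((m - j) + 1),
      (m.choose (j + k) : ℝ) * ((j + k).choose j : ℝ) * (t ^ (j + k) * (1 - t) ^ (m - (j + k)))
      = (m.choose j : ℝ) * t ^ j *
        (t ^ k * (1 - t) ^ ((m - j) - k) * ((m - j).choose k : ℝ)) := by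
    intro k hk
    have hk' : k ≤ m - j := by simpa [Nat.lt_succ_iff] using hk
    have hjk : j + k ≤ m := by omega
    have hcc : (m.choose (j + k)) * ((j + k).choose j) = m.choose j * (m - j).choose k := by
      rw [Nat.choose_mul (Nat.le_add_right _ _), Nat.add_sub_cancel_left]
    have h3 : m - (j + k) = (m - j) - k := by omega
    calc (m.choose (j + k) : ℝ) * ((j + k).choose j : ℝ) * (t ^ (j + k) * (1 - t) ^ (m - (j + k)))
        = ((m.choose (j + k)) * ((j + k).choose j) : ℕ) * (t ^ (j + k) * (1 - t) ^ (m - (j + k))) := by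
          push_cast; ring
      _ = (m.choose j : ℝ) * t ^ j * (t ^ k * (1 - t) ^ ((m - j) - k) * ((m - j).choose k : ℝ)) := by
          rw [hcc, h3]
          push_cast
          rw [pow_add]
          ring
  rw [Finset.sum_congr rfl h2, ← Finset.mul_sum]
  have := add_pow t (1 - t) (m - j)
  simp only [add_sub_cancel, one_pow] at this
  rw [← this]
  ring

/-- Binomial addition formula for the q-Euler polynomial: for `0 < q < 1`,
`E_{m,q}^{(-m,1)}(x) = Σ_{i=0}^m C(m,i) q^{xi} e_i [x]_q^{m-i}`, where
`e_i = [2]_q (1-q)^{-i} Σ_{j=0}^i C(i,j)(-1)^j/(1+q^{j-m})`. -/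
theorem q_euler_polynomial_addition (q x : ℝ) (hq0 : 0 < q) (hq1 : q < 1) (m : ℕ) :
    (1 + q) / (1 - q) ^ m *
        ∑ j ∈ Finset.range (m + 1), (m.choose j : ℝ) * (-1) ^ j * q ^ ((j : ℝ) * x) /
          (1 + q ^ ((j : ℝ) - (m : ℝ)))
      = ∑ i ∈ Finset.range (m + 1), (m.choose i : ℝ) * q ^ (x * (i : ℝ)) *
          ((1 + q) / (1 - q) ^ i *
            ∑ j ∈ Finset.range (i + 1), (i.choose j : ℝ) * (-1) ^ j /
              (1 + q ^ ((j : ℝ) - (m : ℝ)))) *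
          ((1 - q ^ x) / (1 - q)) ^ (m - i) := by
  have hne : (1 : ℝ) - q ≠ 0 := by linarith
  have ha : ∀ j : ℕ, (1 + q ^ ((j : ℝ) - (m : ℝ))) ≠ 0 := by
    intro j
    have : (0:ℝ) < q ^ ((j : ℝ) - (m : ℝ)) := Real.rpow_pos_of_pos hq0 _
    positivity
  set t := q ^ x with ht
  have hqj : ∀ j : ℕ, q ^ ((j : ℝ) * x) = t ^ j := by
    intro j
    rw [mul_comm, Real.rpow_mul hq0.le, Real.rpow_natCast]
  have hqi : ∀ i : ℕ, q ^ (x * (i : ℝ)) = t ^ i := by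
    intro i
    rw [Real.rpow_mul hq0.le, Real.rpow_natCast]
  simp only [hqj, hqi]
  -- core combinatorial identity
  have key : ∑ j ∈ Finset.range (m + 1),
        (m.choose j : ℝ) * (-1) ^ j * t ^ j / (1 + q ^ ((j : ℝ) - (m : ℝ)))
      = ∑ i ∈ Finset.range (m + 1), (t ^ i * (1 - t) ^ (m - i)) * ((m.choose i : ℝ) *
          ∑ j ∈ Finset.range (i + 1), (i.choose j : ℝ) * (-1) ^ j /
            (1 + q ^ ((j : ℝ) - (m : ℝ)))) := by
    have hext : ∀ i ∈ Finset.range (m + 1),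
        (t ^ i * (1 - t) ^ (m - i)) * ((m.choose i : ℝ) *
          ∑ j ∈ Finset.range (i + 1), (i.choose j : ℝ) * (-1) ^ j /
            (1 + q ^ ((j : ℝ) - (m : ℝ))))
        = ∑ j ∈ Finset.range (m + 1),
            (m.choose i : ℝ) * (i.choose j : ℝ) * (t ^ i * (1 - t) ^ (m - i)) *
              ((-1) ^ j / (1 + q ^ ((j : ℝ) - (m : ℝ)))) := by
      intro i hi
      have hi' : i + 1 ≤ m + 1 := by
        simp only [Finset.mem_range] at hi; omega
      rw [Finset.mul_sum, Finset.mul_sum]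
      rw [← Finset.sum_subset (Finset.range_subset_range.2 hi')]
      · exact Finset.sum_congr rfl fun j hj => by ring
      · intro j hj hnj
        have : i < j := by
          simp only [Finset.mem_range] at hj hnj; omega
        rw [Nat.choose_eq_zero_of_lt this]
        simp
    rw [Finset.sum_congr rfl hext, Finset.sum_comm]
    refine Finset.sum_congr rfl fun j hj => ?_
    have hjm : j ≤ m := by simp only [Finset.mem_range] at hj; omega
    have : ∑ i ∈ Finset.range (m + 1),
        (m.choose i : ℝ) * (i.choose j : ℝ) * (t ^ i * (1 - t) ^ (m - i)) *
          ((-1) ^ j / (1 + q ^ ((j : ℝ) - (m : ℝ))))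
        = (∑ i ∈ Finset.range (m + 1),
        (m.choose i : ℝ) * (i.choose j : ℝ) * (t ^ i * (1 - t) ^ (m - i))) *
          ((-1) ^ j / (1 + q ^ ((j : ℝ) - (m : ℝ)))) := by
      rw [Finset.sum_mul]
    rw [this, choose_sum_aux t hjm]
    field_simp
  rw [key, Finset.mul_sum]
  refine Finset.sum_congr rfl fun i hi => ?_
  have him : i ≤ m := by simp only [Finset.mem_range] at hi; omega
  have hpow : ((1:ℝ) - q) ^ i * (1 - q) ^ (m - i) = (1 - q) ^ m := by
    rw [← pow_add, Nat.add_sub_cancel' him]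
  rw [div_pow, ← hpow]
  have h1 : ((1:ℝ) - q) ^ i ≠ 0 := pow_ne_zero _ hne
  have h2 : ((1:ℝ) - q) ^ (m - i) ≠ 0 := pow_ne_zero _ hne
  field_simp
end

section
/- (Multiplication theorem specialization) For 0 < q < 1, m ≥ 1, and odd positive integer n: E_{m,q} − ([2]_q/[2]_{q^n}) [n]_q^m E_{m,q^n} = ([2]_q/[2]_{q^n}) Σ_{k=0}^{m-1} binom(m,k) [n]_q^k E_{k,q^n}^{(-m)} Σ_{j=1}^{n-1} q^{-(m-k)j} (-1)^j [j]_q^{m-k}, where E_{k,q}^{(-m)} := [2]_q (1-q)^{-k} Σ_{j=0}^k binom(k,j)(-1)^j/(1+q^{j-m}) and E_{m,q} := E_{m,q}^{(-m)}. -/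
/-! With `u = q⁻¹` and the common factor `(1 + q) / (1 - q) ^ m` cleared, the identity reads
`A_m(u) - A_m(uⁿ) = ∑_{k<m} C(m,k) A_k(uⁿ) V_{m-k}(u)`, where
`A_k(u) = ∑_{j≤k} C(k,j) (-1)^j / (1 + u^(m-j))` and `V_p(u) = ∑_{j<n} (-1)^j (u^j - 1)^p`;
the missing `k = m` term is `A_m(uⁿ)` because `V_0 = 1` for odd `n`.
Expanding `u^(j(m-i)) = ((u^j - 1) + 1)^(m-i)` binomially, the full sum over `k ≤ m` becomes
`∑_i C(m,i) (-1)^i (1 + a_i^n)⁻¹ ∑_{j<n} (-a_i)^j` with `a_i = u^(m-i)`, and for odd `n` the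
alternating geometric sum equals `(1 + a_i^n) / (1 + a_i)`. -/

open Finset

section

variable {R : Type*} [CommRing R]

theorem sum_choose_mul_sum_choose_mul_pow (f : ℕ → R) (x : R) (m : ℕ) :
    ∑ k ∈ range (m + 1), (m.choose k : R) * (∑ i ∈ range (k + 1), (k.choose i : R) * f i) *
        x ^ (m - k)
      = ∑ i ∈ range (m + 1), (m.choose i : R) * f i * (x + 1) ^ (m - i) := by
  simp_rw [mul_sum, sum_mul]
  rw [sum_comm' (t' := range (m + 1)) (s' := fun i => Ico i (m + 1))
    (by intro k i; simp only [mem_range, mem_Ico]; omega)]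
  refine sum_congr rfl fun i hi => ?_
  have him : i ≤ m := Nat.lt_succ_iff.mp (mem_range.mp hi)
  rw [add_comm x 1, add_pow, mul_sum, sum_Ico_eq_sum_range, Nat.sub_add_comm him]
  refine sum_congr rfl fun l hl => ?_
  have hl : l ≤ m - i := Nat.lt_succ_iff.mp (mem_range.mp hl)
  have hchoose : (m.choose (i + l) : R) * (i + l).choose i = m.choose i * (m - i).choose l := by
    have := Nat.choose_mul (n := m) (k := i + l) (s := i) (by omega)
    rw [Nat.add_sub_cancel_left] at this
    exact_mod_cast congrArg (Nat.cast : ℕ → R) this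
  rw [one_pow, show m - (i + l) = m - i - l by omega]
  linear_combination (f i * x ^ (m - i - l)) * hchoose

theorem Odd.one_add_mul_sum_neg_one_pow_mul_pow {n : ℕ} (hn : Odd n) (a : R) :
    (1 + a) * ∑ j ∈ range n, (-1) ^ j * a ^ j = 1 + a ^ n := by
  simpa [← mul_pow, hn.neg_pow, sub_eq_add_neg] using mul_neg_geom_sum (-a) n

end

section

variable {K : Type*} [Field K]

theorem Odd.inv_one_add_pow_mul_sum_neg_one_pow_mul_pow {n : ℕ} (hn : Odd n) {a : K}
    (ha : 1 + a ^ n ≠ 0) :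
    (1 + a ^ n)⁻¹ * ∑ j ∈ range n, (-1) ^ j * a ^ j = (1 + a)⁻¹ := by
  have h := hn.one_add_mul_sum_neg_one_pow_mul_pow a
  have ha' : 1 + a ≠ 0 := left_ne_zero_of_mul (h ▸ ha)
  have hs : ∑ j ∈ range n, (-1) ^ j * a ^ j ≠ 0 := right_ne_zero_of_mul (h ▸ ha)
  rw [← h]
  field_simp

/-- `E_{k,q}^{(-m)} = [2]_q (1 - q)^{-k} altBinomSum q⁻¹ m k` for `k ≤ m`. -/
def altBinomSum (u : K) (m k : ℕ) : K :=
  ∑ j ∈ range (k + 1), (k.choose j : K) * (-1) ^ j / (1 + u ^ (m - j))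

/-- Encodes `∑_j (-1)^j q^{-pj} [j]_q^p` via `q^{-pj} [j]_q^p = (q^{-j} - 1)^p / (1 - q)^p`. -/
def altPowSum (u : K) (n p : ℕ) : K :=
  ∑ j ∈ range n, (-1) ^ j * (u ^ j - 1) ^ p

theorem Odd.altPowSum_zero {n : ℕ} (hn : Odd n) (u : K) : altPowSum u n 0 = 1 := by
  simp [altPowSum, neg_one_geom_sum, Nat.not_even_iff_odd.2 hn]

theorem sum_choose_mul_altBinomSum_pow_mul_altPowSum {n : ℕ} (hn : Odd n) {u : K}
    (hu : ∀ p, 1 + (u ^ p) ^ n ≠ 0) (m : ℕ) :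
    ∑ k ∈ range (m + 1), (m.choose k : K) * altBinomSum (u ^ n) m k * altPowSum u n (m - k)
      = altBinomSum u m m := by
  calc _ = ∑ j ∈ range n, (-1) ^ j * ∑ k ∈ range (m + 1), (m.choose k : K) *
          (∑ i ∈ range (k + 1), (k.choose i : K) * ((-1) ^ i / (1 + (u ^ n) ^ (m - i)))) *
            (u ^ j - 1) ^ (m - k) := by
        simp_rw [altPowSum, altBinomSum, mul_div_assoc, mul_sum]
        rw [sum_comm]
        exact sum_congr rfl fun j _ => sum_congr rfl fun k _ => by ring
    _ = ∑ j ∈ range n, (-1) ^ j * ∑ i ∈ range (m + 1), (m.choose i : K) *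
          ((-1) ^ i / (1 + (u ^ n) ^ (m - i))) * (u ^ (m - i)) ^ j := by
        simp_rw [sum_choose_mul_sum_choose_mul_pow, sub_add_cancel, ← pow_mul, mul_comm]
    _ = ∑ i ∈ range (m + 1), (m.choose i : K) * (-1) ^ i *
          ((1 + (u ^ (m - i)) ^ n)⁻¹ * ∑ j ∈ range n, (-1) ^ j * (u ^ (m - i)) ^ j) := by
        simp_rw [mul_sum]
        rw [sum_comm]
        refine sum_congr rfl fun i _ => sum_congr rfl fun j _ => ?_
        rw [pow_right_comm]
        ring
    _ = altBinomSum u m m := by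
        simp_rw [hn.inv_one_add_pow_mul_sum_neg_one_pow_mul_pow (hu _), altBinomSum, div_eq_mul_inv]

theorem altBinomSum_sub_altBinomSum_pow {n : ℕ} (hn : Odd n) {u : K}
    (hu : ∀ p, 1 + (u ^ p) ^ n ≠ 0) (m : ℕ) :
    altBinomSum u m m - altBinomSum (u ^ n) m m
      = ∑ k ∈ range m, (m.choose k : K) * altBinomSum (u ^ n) m k * altPowSum u n (m - k) := by
  rw [← sum_choose_mul_altBinomSum_pow_mul_altPowSum hn hu, sum_range_succ, Nat.sub_self,
    hn.altPowSum_zero, Nat.choose_self, Nat.cast_one, one_mul, mul_one, add_sub_cancel_right]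

end

theorem Real.rpow_natCast_sub_natCast_of_le {x : ℝ} (hx : x ≠ 0) {j m : ℕ} (h : j ≤ m) :
    x ^ ((j : ℝ) - m) = x⁻¹ ^ (m - j) := by
  rw [Real.rpow_sub_natCast hx, Real.rpow_natCast, inv_pow, ← pow_sub_mul_pow x h]
  field_simp

theorem sum_choose_div_one_add_rpow_eq_altBinomSum {Q : ℝ} (hQ : Q ≠ 0) {k m : ℕ}
    (hkm : k ≤ m) :
    ∑ j ∈ range (k + 1), (k.choose j : ℝ) * (-1) ^ j / (1 + Q ^ ((j : ℝ) - (m : ℝ)))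
      = altBinomSum Q⁻¹ m k :=
  sum_congr rfl fun j hj => by
    rw [Real.rpow_natCast_sub_natCast_of_le hQ ((Nat.lt_succ_iff.mp (mem_range.mp hj)).trans hkm)]

theorem sum_Ico_zpow_mul_neg_one_pow_mul_div_pow {K : Type*} [Field K] {q : K} (hq : q ≠ 0)
    {n p : ℕ} (hn : 0 < n) (hp : p ≠ 0) :
    ∑ j ∈ Ico 1 n, q ^ (-((p * j : ℕ) : ℤ)) * (-1) ^ j * ((1 - q ^ j) / (1 - q)) ^ p
      = altPowSum q⁻¹ n p / (1 - q) ^ p := by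
  rw [altPowSum, range_eq_Ico, sum_eq_sum_Ico_succ_bot hn]
  simp only [pow_zero, sub_self, zero_pow hp, mul_zero, zero_add, sum_div]
  refine sum_congr rfl fun j _ => ?_
  have hqj : q⁻¹ ^ j - 1 = (1 - q ^ j) / q ^ j := by rw [inv_pow]; field_simp
  rw [zpow_neg, zpow_natCast, mul_comm p, pow_mul, hqj, div_pow, div_pow]
  ring

theorem q_euler_multiplication_general (q : ℝ) (hq0 : 0 < q) (hq1 : q < 1)
    (m n : ℕ) (hn : Odd n) :
    ((1 + q) / (1 - q) ^ m *
        ∑ j ∈ Finset.range (m + 1), (m.choose j : ℝ) * (-1) ^ j /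
          (1 + q ^ ((j : ℝ) - (m : ℝ))))
      - (1 + q) / (1 + q ^ n) * ((1 - q ^ n) / (1 - q)) ^ m *
        ((1 + q ^ n) / (1 - q ^ n) ^ m *
          ∑ j ∈ Finset.range (m + 1), (m.choose j : ℝ) * (-1) ^ j /
            (1 + (q ^ n) ^ ((j : ℝ) - (m : ℝ))))
    = (1 + q) / (1 + q ^ n) *
        ∑ k ∈ Finset.range m, (m.choose k : ℝ) * ((1 - q ^ n) / (1 - q)) ^ k *
          ((1 + q ^ n) / (1 - q ^ n) ^ k *
            ∑ j ∈ Finset.range (k + 1), (k.choose j : ℝ) * (-1) ^ j /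
              (1 + (q ^ n) ^ ((j : ℝ) - (m : ℝ)))) *
          ∑ j ∈ Finset.Ico 1 n, q ^ (-(((m - k) * j : ℕ) : ℤ)) * (-1 : ℝ) ^ j *
            ((1 - q ^ j) / (1 - q)) ^ (m - k) := by
  have hqn : q ^ n ≠ 0 := by positivity
  have h1q : 1 - q ≠ 0 := by linarith
  have h1qn : 1 - q ^ n ≠ 0 := sub_ne_zero.2 (pow_lt_one₀ hq0.le hq1 hn.pos.ne').ne'
  have h1pqn : 1 + q ^ n ≠ 0 := by positivity
  have key := altBinomSum_sub_altBinomSum_pow hn (u := q⁻¹) (fun p => by positivity) m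
  rw [sum_choose_div_one_add_rpow_eq_altBinomSum hq0.ne' le_rfl,
    sum_choose_div_one_add_rpow_eq_altBinomSum hqn le_rfl, ← inv_pow,
    mul_sum]
  have hterm : ∀ k ∈ range m, (1 + q) / (1 + q ^ n) * ((m.choose k : ℝ) *
      ((1 - q ^ n) / (1 - q)) ^ k * ((1 + q ^ n) / (1 - q ^ n) ^ k *
        ∑ j ∈ range (k + 1), (k.choose j : ℝ) * (-1) ^ j /
          (1 + (q ^ n) ^ ((j : ℝ) - (m : ℝ)))) *
      ∑ j ∈ Ico 1 n, q ^ (-(((m - k) * j : ℕ) : ℤ)) * (-1 : ℝ) ^ j *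
        ((1 - q ^ j) / (1 - q)) ^ (m - k))
      = (1 + q) / (1 - q) ^ m *
        ((m.choose k : ℝ) * altBinomSum (q⁻¹ ^ n) m k * altPowSum q⁻¹ n (m - k)) := by
    intro k hk
    have hkm : k < m := mem_range.mp hk
    rw [sum_choose_div_one_add_rpow_eq_altBinomSum hqn hkm.le, ← inv_pow,
      sum_Ico_zpow_mul_neg_one_pow_mul_div_pow hq0.ne' hn.pos (by omega),
      ← pow_sub_mul_pow (1 - q) hkm.le, div_pow]
    field_simp
  rw [sum_congr rfl hterm, ← mul_sum, ← key, div_pow]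
  field_simp

/-- Multiplication theorem: for `0 < q < 1`, `m ≥ 1` and odd positive `n`,
`E_{m,q} − ([2]_q/[2]_{q^n}) [n]_q^m E_{m,q^n}
  = ([2]_q/[2]_{q^n}) Σ_{k=0}^{m-1} C(m,k) [n]_q^k E_{k,q^n}^{(-m)}
      Σ_{j=1}^{n-1} q^{-(m-k)j} (-1)^j [j]_q^{m-k}`,
where `E_{k,Q}^{(-m)} = [2]_Q (1-Q)^{-k} Σ_{j=0}^k C(k,j)(-1)^j/(1+Q^{j-m})`
(with `Q^{j-m}` the real power) and `E_{m,q} = E_{m,q}^{(-m)}`. -/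
theorem q_euler_multiplication (q : ℝ) (hq0 : 0 < q) (hq1 : q < 1)
    (m n : ℕ) (hm : 1 ≤ m) (hn : Odd n) (hn1 : 1 ≤ n) :
    ((1 + q) / (1 - q) ^ m *
        ∑ j ∈ Finset.range (m + 1), (m.choose j : ℝ) * (-1) ^ j /
          (1 + q ^ ((j : ℝ) - (m : ℝ))))
      - (1 + q) / (1 + q ^ n) * ((1 - q ^ n) / (1 - q)) ^ m *
        ((1 + q ^ n) / (1 - q ^ n) ^ m *
          ∑ j ∈ Finset.range (m + 1), (m.choose j : ℝ) * (-1) ^ j /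
            (1 + (q ^ n) ^ ((j : ℝ) - (m : ℝ))))
    = (1 + q) / (1 + q ^ n) *
        ∑ k ∈ Finset.range m, (m.choose k : ℝ) * ((1 - q ^ n) / (1 - q)) ^ k *
          ((1 + q ^ n) / (1 - q ^ n) ^ k *
            ∑ j ∈ Finset.range (k + 1), (k.choose j : ℝ) * (-1) ^ j /
              (1 + (q ^ n) ^ ((j : ℝ) - (m : ℝ)))) *
          ∑ j ∈ Finset.Ico 1 n, q ^ (-(((m - k) * j : ℕ) : ℤ)) * (-1 : ℝ) ^ j *
            ((1 - q ^ j) / (1 - q)) ^ (m - k) :=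
  q_euler_multiplication_general q hq0 hq1 m n hn
end

section
/- For the ordinary Euler numbers E_m defined by 2/(e^t+1) = Σ E_m t^m/m!, and any odd positive integer n and m ≥ 1: (1 − n^m) E_m = Σ_{k=0}^{m-1} binom(m,k) n^k E_k Σ_{j=1}^{n-1} (-1)^j j^{m-k}. -/
/-!
For odd `n`, `(eᵗ + 1) ∑_{j<n} (-1)ʲ eʲᵗ = eⁿᵗ + 1`, so
`2 / (eᵗ + 1) = 2 / (eⁿᵗ + 1) · ∑_{j<n} (-1)ʲ eʲᵗ`. The right side is a product of two exponential
generating functions; comparing coefficients (uniqueness of power series expansions) gives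
`E_m = ∑_{k ≤ m} C(m,k) nᵏ E_k ∑_{j<n} (-1)ʲ j^(m-k)`. The term `k = m` is `nᵐ E_m`, because the
alternating sum of `n` ones is `1`, and for `k < m` the `j = 0` term vanishes.
-/

open Finset Filter Topology Nat

section

variable {𝕜 : Type*} [NontriviallyNormedField 𝕜]

theorem hasFPowerSeriesAt_ofScalars_of_eventually_hasSum {a : ℕ → 𝕜} {f : 𝕜 → 𝕜}
    (h : ∀ᶠ t in 𝓝 0, HasSum (fun m => a m * t ^ m) (f t)) :
    HasFPowerSeriesAt f (FormalMultilinearSeries.ofScalars 𝕜 a) 0 := by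
  obtain ⟨ε, hε, hball⟩ := Metric.eventually_nhds_iff_ball.1 h
  obtain ⟨t, ht0, htε⟩ := NormedField.exists_norm_lt 𝕜 hε
  refine ⟨‖t‖₊, ⟨?_, by simpa using ht0, fun {y} hy => ?_⟩⟩
  · apply FormalMultilinearSeries.le_radius_of_tendsto (l := 0)
    simpa [FormalMultilinearSeries.ofScalars_norm, norm_mul, norm_pow] using
      (hball t (by simpa using htε)).summable.tendsto_atTop_zero.norm
  · have hy' : y ∈ Metric.ball (0 : 𝕜) ε := by
      rw [mem_eball_zero_iff, enorm_eq_nnnorm, ENNReal.coe_lt_coe, ← NNReal.coe_lt_coe] at hy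
      simpa using hy.trans htε
    simpa [FormalMultilinearSeries.ofScalars_apply_eq, mul_comm] using hball y hy'

theorem coeff_eq_of_eventually_hasSum {a b : ℕ → 𝕜} {f : 𝕜 → 𝕜}
    (ha : ∀ᶠ t in 𝓝 0, HasSum (fun m => a m * t ^ m) (f t))
    (hb : ∀ᶠ t in 𝓝 0, HasSum (fun m => b m * t ^ m) (f t)) : a = b :=
  FormalMultilinearSeries.ofScalars_series_injective 𝕜 𝕜
    ((hasFPowerSeriesAt_ofScalars_of_eventually_hasSum ha).eq_formalMultilinearSeries
      (hasFPowerSeriesAt_ofScalars_of_eventually_hasSum hb))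

end

theorem Odd.add_one_mul_sum_neg_pow {R : Type*} [CommRing R] {n : ℕ} (hn : Odd n) (x : R) :
    (x + 1) * ∑ j ∈ range n, (-x) ^ j = x ^ n + 1 := by
  have h := geom_sum_mul (-x) n
  rw [hn.neg_pow] at h
  linear_combination -h

theorem hasSum_sum_mul_exp_mul {ι : Type*} (s : Finset ι) (c w : ι → ℝ) (t : ℝ) :
    HasSum (fun r => (∑ j ∈ s, c j * w j ^ r) / r ! * t ^ r)
      (∑ j ∈ s, c j * Real.exp (w j * t)) := by
  have hexp (j : ι) : HasSum (fun r => c j * ((w j * t) ^ r / r !)) (c j * Real.exp (w j * t)) := by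
    rw [Real.exp_eq_exp_ℝ]
    exact (NormedSpace.expSeries_div_hasSum_exp (w j * t)).mul_left (c j)
  convert hasSum_sum fun j _ => hexp j using 2 with r
  rw [sum_div, sum_mul]
  refine sum_congr rfl fun j _ => ?_
  ring

theorem HasSum.mul_egf {a b : ℕ → ℝ} {A B t : ℝ}
    (ha : HasSum (fun k => a k / k ! * t ^ k) A) (hb : HasSum (fun k => b k / k ! * t ^ k) B) :
    HasSum (fun m => (∑ k ∈ range (m + 1), (m.choose k : ℝ) * a k * b (m - k)) / m ! * t ^ m)
      (A * B) := by
  have hprod := hasSum_sum_range_mul_of_summable_norm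
    ((summable_norm_iff (E := ℝ)).2 ha.summable) ((summable_norm_iff (E := ℝ)).2 hb.summable)
  rw [ha.tsum_eq, hb.tsum_eq] at hprod
  refine hprod.congr_fun fun m => ?_
  rw [sum_div, sum_mul]
  refine sum_congr rfl fun k hk => ?_
  have hkm : k ≤ m := Nat.lt_succ_iff.mp (mem_range.mp hk)
  rw [Nat.cast_choose ℝ hkm, ← pow_mul_pow_sub t hkm]
  field_simp

theorem sum_range_eq_sum_Ico_one {M : Type*} [AddCommMonoid M] {f : ℕ → M} (hf : f 0 = 0)
    (n : ℕ) : ∑ j ∈ range n, f j = ∑ j ∈ Ico 1 n, f j := by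
  refine (sum_subset (fun j hj => ?_) fun j hj hj' => ?_).symm
  · simp only [mem_Ico, mem_range] at hj ⊢
    exact hj.2
  · simp only [mem_Ico, mem_range, not_and, not_lt] at hj hj'
    rw [show j = 0 by omega, hf]

theorem euler_eq_sum_choose_mul_sum_neg_one_pow_mul_pow (E : ℕ → ℝ)
    (hE : ∀ᶠ t in 𝓝 0, HasSum (fun k => E k / k ! * t ^ k) (2 / (Real.exp t + 1)))
    {n : ℕ} (hn : Odd n) (m : ℕ) :
    E m = ∑ k ∈ range (m + 1),
      (m.choose k : ℝ) * ((n : ℝ) ^ k * E k) * ∑ j ∈ range n, (-1) ^ j * (j : ℝ) ^ (m - k) := by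
  have hEn : ∀ᶠ t in 𝓝 (0 : ℝ), HasSum (fun k => (n : ℝ) ^ k * E k / k ! * t ^ k)
      (2 / (Real.exp (n * t) + 1)) := by
    have hlim : Tendsto (fun t : ℝ => (n : ℝ) * t) (𝓝 0) (𝓝 0) := by
      simpa using (continuous_const_mul (n : ℝ)).tendsto 0
    filter_upwards [hlim.eventually hE] with t ht
    convert ht using 2 with k
    ring
  have hprod : ∀ᶠ t in 𝓝 (0 : ℝ), HasSum (fun m => (∑ k ∈ range (m + 1), (m.choose k : ℝ) *
      ((n : ℝ) ^ k * E k) * ∑ j ∈ range n, (-1) ^ j * (j : ℝ) ^ (m - k)) / m ! * t ^ m)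
      (2 / (Real.exp t + 1)) := by
    filter_upwards [hEn] with t ht
    convert ht.mul_egf (hasSum_sum_mul_exp_mul (range n) (fun j => (-1) ^ j) (fun j => j) t)
      using 1
    have hgeom := hn.add_one_mul_sum_neg_pow (Real.exp t)
    simp only [neg_pow (Real.exp t), ← Real.exp_nat_mul] at hgeom
    rw [div_mul_eq_mul_div, eq_div_iff (by positivity), ← hgeom, ← mul_assoc,
      div_mul_cancel₀ _ (by positivity)]
  have hcoeff := congrFun (coeff_eq_of_eventually_hasSum hE hprod) m
  exact (div_left_inj' (by positivity)).1 hcoeff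

theorem euler_number_multiplication_general (E : ℕ → ℝ)
    (hE : ∀ t : ℝ, |t| < 1 →
      HasSum (fun k : ℕ => E k * t ^ k / (k.factorial : ℝ)) (2 / (Real.exp t + 1)))
    (n m : ℕ) (hn : Odd n) :
    (1 - (n : ℝ) ^ m) * E m =
      ∑ k ∈ Finset.range m, (m.choose k : ℝ) * (n : ℝ) ^ k * E k *
        ∑ j ∈ Finset.Ico 1 n, (-1 : ℝ) ^ j * (j : ℝ) ^ (m - k) := by
  have hE' : ∀ᶠ t in 𝓝 (0 : ℝ), HasSum (fun k => E k / k ! * t ^ k) (2 / (Real.exp t + 1)) := by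
    filter_upwards [eventually_abs_sub_lt 0 one_pos] with t ht
    simpa only [mul_div_right_comm] using hE t (by simpa using ht)
  have hsum := euler_eq_sum_choose_mul_sum_neg_one_pow_mul_pow E hE' hn m
  have hlast : ∑ j ∈ range n, (-1 : ℝ) ^ j * (j : ℝ) ^ (m - m) = 1 := by
    simp [neg_one_geom_sum, Nat.not_even_iff_odd.2 hn]
  rw [sum_range_succ, Nat.choose_self, hlast] at hsum
  rw [sum_congr rfl fun k hk => by
    rw [sum_range_eq_sum_Ico_one (by simp [Nat.sub_ne_zero_of_lt (mem_range.1 hk)])]] at hsum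
  simp only [← mul_assoc] at hsum
  linear_combination hsum

/-- For the ordinary Euler numbers `E_m` (defined by `2/(e^t+1) = Σ E_m t^m/m!`),
any odd positive integer `n` and `m ≥ 1`:
`(1 − n^m) E_m = Σ_{k=0}^{m-1} C(m,k) n^k E_k Σ_{j=1}^{n-1} (-1)^j j^{m-k}`. -/
theorem euler_number_multiplication (E : ℕ → ℝ)
    (hE : ∀ t : ℝ, |t| < 1 →
      HasSum (fun k : ℕ => E k * t ^ k / (k.factorial : ℝ)) (2 / (Real.exp t + 1)))
    (n m : ℕ) (hn : Odd n) (hn1 : 1 ≤ n) (hm : 1 ≤ m) :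
    (1 - (n : ℝ) ^ m) * E m =
      ∑ k ∈ Finset.range m, (m.choose k : ℝ) * (n : ℝ) ^ k * E k *
        ∑ j ∈ Finset.Ico 1 n, (-1 : ℝ) ^ j * (j : ℝ) ^ (m - k) :=
  euler_number_multiplication_general E hE n m hn
end

section
/- For 0 < q < 1, an odd positive integer d, a function χ : ℤ → ℂ periodic with period d, and s ∈ ℂ with Re(s) > 1: [2]_q Σ_{n=1}^∞ χ(n)(-1)^n q^{sn}/[n]_q^s = ([2]_q/[2]_{q^d}) [d]_q^{-s} Σ_{a=1}^{d} χ(a)(-1)^a q^{sa} · ζ_{q^d,E}(s, a/d), where ζ_{Q,E}(s,x) = [2]_Q Σ_{n=0}^∞ (-1)^n Q^{sn}/[n+x]_Q^s. -/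
/-!
Write `n = a + d k` with `1 ≤ a ≤ d` and `k ≥ 0`. Since `d` is odd, `(-1)^n = (-1)^a (-1)^k`;
periodicity gives `χ n = χ a`; `q^{sn} = q^{sa} (q^d)^{sk}`; and
`[a + d k]_q = [d]_q [k + a/d]_{q^d}`. The series converges absolutely (`χ` is bounded and the
terms are `O(q^{n Re s})`), so it splits into the `d` residue classes, and the class of `a` is
`ζ_{q^d,E}(s, a/d)` times the factors above.
-/

open Finset

lemma neg_one_pow_mul_of_odd {R : Type*} [Monoid R] [HasDistribNeg R] {d : ℕ} (hd : Odd d)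
    (k : ℕ) : (-1 : R) ^ (d * k) = (-1) ^ k := by
  rw [pow_mul, hd.neg_one_pow]

lemma Function.Periodic.exists_norm_le {E : Type*} [SeminormedAddCommGroup E] {f : ℤ → E}
    {c : ℤ} (h : Function.Periodic f c) (hc : 0 < c) : ∃ C, ∀ n, ‖f n‖ ≤ C := by
  refine ⟨∑ i ∈ Ico 0 c, ‖f i‖, fun n => ?_⟩
  obtain ⟨y, hy, hfy⟩ := h.exists_mem_Ico₀ hc n
  rw [hfy]
  exact single_le_sum (fun i _ => norm_nonneg (f i)) (mem_Ico.mpr hy)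

lemma tsum_succ_eq_sum_Icc_tsum {R : Type*} [AddCommGroup R] [UniformSpace R]
    [IsUniformAddGroup R] [CompleteSpace R] [T0Space R] {f : ℕ → R}
    (hf : Summable fun n => f (n + 1)) (N : ℕ) [NeZero N] :
    ∑' n, f (n + 1) = ∑ a ∈ Icc 1 N, ∑' k, f (a + N * k) := by
  rw [Nat.sumByResidueClasses hf N]
  refine sum_nbij' (fun j => j.val + 1) (fun a => ((a - 1 : ℕ) : ZMod N)) ?_ ?_ ?_ ?_ ?_
  · intro j _
    have := j.val_lt
    simp only [mem_Icc]
    omega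
  · intro a _
    exact mem_univ _
  · intro j _
    simp
  · intro a ha
    rw [mem_Icc] at ha
    rw [ZMod.val_natCast_of_lt (by omega)]
    omega
  · intro j _
    congr! 2 with k
    rw [add_right_comm]

lemma pow_rpow_natCast_add_div {q : ℝ} (hq : 0 ≤ q) {d : ℕ} (hd : d ≠ 0) (a k : ℕ) :
    (q ^ d) ^ ((k : ℝ) + (a : ℝ) / (d : ℝ)) = q ^ (a + d * k) := by
  rw [← Real.rpow_natCast q d, ← Real.rpow_mul hq, ← Real.rpow_natCast]
  congr 1
  push_cast
  field_simp
  ring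

lemma log_qNum_add_mul {q : ℝ} (hq0 : 0 ≤ q) (hq1 : q ≠ 1) {d : ℕ} (hd : d ≠ 0) {a k : ℕ}
    (hak : a + d * k ≠ 0) :
    Real.log ((1 - q ^ (a + d * k)) / (1 - q)) =
      Real.log ((1 - q ^ d) / (1 - q)) +
        Real.log ((1 - (q ^ d) ^ ((k : ℝ) + (a : ℝ) / (d : ℝ))) / (1 - q ^ d)) := by
  have h1 : ∀ m ≠ 0, 1 - q ^ m ≠ 0 := fun m hm =>
    sub_ne_zero.mpr fun h => hq1 ((pow_eq_one_iff_of_nonneg hq0 hm).mp h.symm)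
  have hq : 1 - q ≠ 0 := by simpa using h1 1 one_ne_zero
  rw [pow_rpow_natCast_add_div hq0 hd, ← Real.log_mul (div_ne_zero (h1 d hd) hq)
    (div_ne_zero (h1 _ hak) (h1 d hd))]
  congr 1
  field_simp [h1 d hd]

lemma log_qNum_nonneg {q : ℝ} (hq0 : 0 ≤ q) (hq1 : q < 1) (m : ℕ) :
    0 ≤ Real.log ((1 - q ^ m) / (1 - q)) := by
  rcases Nat.eq_zero_or_pos m with rfl | hm
  · simp
  refine Real.log_nonneg ((one_le_div (by linarith)).mpr ?_)
  linarith [pow_le_of_le_one hq0 hq1.le hm.ne']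

noncomputable def qEulerLTerm (χ : ℤ → ℂ) (q : ℝ) (s : ℂ) (m : ℕ) : ℂ :=
  χ m * (-1) ^ m * Complex.exp (s * m * Real.log q) /
    Complex.exp (s * Real.log ((1 - q ^ m) / (1 - q)))

lemma norm_qEulerLTerm_le {q : ℝ} (hq0 : 0 ≤ q) (hq1 : q < 1) {s : ℂ} (hs : 0 ≤ s.re)
    (χ : ℤ → ℂ) (m : ℕ) :
    ‖qEulerLTerm χ q s m‖ ≤ ‖χ m‖ * Real.exp (s.re * Real.log q) ^ m := by
  have hden : 1 ≤ ‖Complex.exp (s * Real.log ((1 - q ^ m) / (1 - q)))‖ := by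
    rw [Complex.norm_exp, Complex.re_mul_ofReal]
    exact Real.one_le_exp (mul_nonneg hs (log_qNum_nonneg hq0 hq1 m))
  have hnum : ‖Complex.exp (s * m * Real.log q)‖ = Real.exp (s.re * Real.log q) ^ m := by
    rw [Complex.norm_exp, ← Real.exp_nat_mul]
    simp only [Complex.mul_re, Complex.natCast_re, Complex.natCast_im, mul_zero, sub_zero,
      Complex.ofReal_re, Complex.mul_im, zero_add, Complex.ofReal_im, Real.exp_eq_exp]
    ring
  rw [qEulerLTerm, norm_div, norm_mul, norm_mul, hnum, norm_pow, norm_neg, norm_one, one_pow,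
    mul_one]
  exact div_le_self (by positivity) hden

lemma summable_qEulerLTerm {q : ℝ} (hq0 : 0 < q) (hq1 : q < 1) {s : ℂ} (hs : 0 < s.re)
    {χ : ℤ → ℂ} {C : ℝ} (hC : ∀ n, ‖χ n‖ ≤ C) : Summable (qEulerLTerm χ q s) := by
  have hr : Real.exp (s.re * Real.log q) < 1 :=
    Real.exp_lt_one_iff.mpr (mul_neg_of_pos_of_neg hs (Real.log_neg hq0 hq1))
  refine .of_norm_bounded ((summable_geometric_of_lt_one (by positivity) hr).mul_left C)
    fun m => (norm_qEulerLTerm_le hq0.le hq1 hs.le χ m).trans ?_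
  exact mul_le_mul_of_nonneg_right (hC m) (by positivity)

lemma qEulerLTerm_add_mul {q : ℝ} (hq0 : 0 ≤ q) (hq1 : q ≠ 1) {d : ℕ} (hd : Odd d)
    {χ : ℤ → ℂ} (hχ : Function.Periodic χ d) (s : ℂ) {a : ℕ} (ha : a ≠ 0) (k : ℕ) :
    qEulerLTerm χ q s (a + d * k) =
      χ a * (-1) ^ a * Complex.exp (s * a * Real.log q) *
        Complex.exp (-s * Real.log ((1 - q ^ d) / (1 - q))) *
        ((-1) ^ k * Complex.exp (s * k * Real.log (q ^ d)) /
          Complex.exp (s * Real.log ((1 - (q ^ d) ^ ((k : ℝ) + a / d)) / (1 - q ^ d)))) := by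
  have hχa : χ ((a + d * k : ℕ) : ℤ) = χ a := by
    simpa [mul_comm] using hχ.nat_mul k a
  have hsign : (-1 : ℂ) ^ (a + d * k) = (-1) ^ a * (-1) ^ k := by
    rw [pow_add, neg_one_pow_mul_of_odd hd]
  have hnum : Complex.exp (s * (a + d * k : ℕ) * Real.log q) =
      Complex.exp (s * a * Real.log q) * Complex.exp (s * k * Real.log (q ^ d)) := by
    rw [Real.log_pow, ← Complex.exp_add]
    push_cast
    ring_nf
  have hden : Complex.exp (s * Real.log ((1 - q ^ (a + d * k)) / (1 - q))) =
      Complex.exp (s * Real.log ((1 - q ^ d) / (1 - q))) *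
        Complex.exp (s * Real.log ((1 - (q ^ d) ^ ((k : ℝ) + a / d)) / (1 - q ^ d))) := by
    rw [log_qNum_add_mul hq0 hq1 hd.pos.ne' (by omega), ← Complex.exp_add]
    push_cast
    ring_nf
  rw [qEulerLTerm, hχa, hsign, hnum, hden, neg_mul, Complex.exp_neg]
  field_simp

theorem q_euler_L_series_general (q : ℝ) (hq0 : 0 < q) (hq1 : q < 1)
    (d : ℕ) (hd : Odd d)
    (χ : ℤ → ℂ) (hχ : ∀ n : ℤ, χ (n + (d : ℤ)) = χ n)
    (s : ℂ) (hs : 1 < s.re) :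
    ((1 + q : ℝ) : ℂ) * ∑' n : ℕ, χ ((n : ℤ) + 1) * (-1) ^ (n + 1) *
        Complex.exp (s * ((n : ℂ) + 1) * (Real.log q : ℂ)) /
        Complex.exp (s * (Real.log ((1 - q ^ (n + 1)) / (1 - q)) : ℂ))
      = (((1 + q) / (1 + q ^ d) : ℝ) : ℂ) *
        Complex.exp (-s * (Real.log ((1 - q ^ d) / (1 - q)) : ℂ)) *
        ∑ a ∈ Finset.Icc 1 d, χ (a : ℤ) * (-1) ^ a *
          Complex.exp (s * (a : ℂ) * (Real.log q : ℂ)) *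
          (((1 + q ^ d : ℝ) : ℂ) * ∑' n : ℕ, (-1) ^ n *
            Complex.exp (s * (n : ℂ) * (Real.log (q ^ d) : ℂ)) /
            Complex.exp (s * (Real.log
              ((1 - (q ^ d) ^ ((n : ℝ) + (a : ℝ) / (d : ℝ))) / (1 - q ^ d)) : ℂ))) := by
  have : NeZero d := ⟨hd.pos.ne'⟩
  have hper : Function.Periodic χ d := hχ
  obtain ⟨C, hC⟩ := hper.exists_norm_le (by exact_mod_cast hd.pos)
  have hsum : Summable fun n => qEulerLTerm χ q s (n + 1) :=
    (summable_nat_add_iff 1).mpr (summable_qEulerLTerm hq0 hq1 (by linarith) hC)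
  have hlhs : ∑' n : ℕ, χ ((n : ℤ) + 1) * (-1) ^ (n + 1) *
        Complex.exp (s * ((n : ℂ) + 1) * (Real.log q : ℂ)) /
        Complex.exp (s * (Real.log ((1 - q ^ (n + 1)) / (1 - q)) : ℂ)) =
      ∑' n, qEulerLTerm χ q s (n + 1) := by
    simp [qEulerLTerm]
  rw [hlhs, tsum_succ_eq_sum_Icc_tsum hsum d, mul_sum, mul_sum]
  refine sum_congr rfl fun a ha => ?_
  have ha0 : a ≠ 0 := by rw [mem_Icc] at ha; omega
  rw [tsum_congr (qEulerLTerm_add_mul hq0.le hq1.ne hd hper s ha0), tsum_mul_left]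
  have hqd : (1 + q ^ d : ℂ) ≠ 0 := by exact_mod_cast (by positivity : (0 : ℝ) < 1 + q ^ d).ne'
  generalize (∑' k : ℕ, _ : ℂ) = T
  push_cast
  field_simp

/-- For `0 < q < 1`, odd positive `d`, a `d`-periodic `χ : ℤ → ℂ` and `Re s > 1`:
`[2]_q Σ_{n=1}^∞ χ(n)(-1)^n q^{sn}/[n]_q^s
  = ([2]_q/[2]_{q^d}) [d]_q^{-s} Σ_{a=1}^d χ(a)(-1)^a q^{sa} ζ_{q^d,E}(s, a/d)`,
with complex powers of positive reals given by `exp(s·log(·))`. -/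
theorem q_euler_L_series (q : ℝ) (hq0 : 0 < q) (hq1 : q < 1)
    (d : ℕ) (hd : Odd d) (hd1 : 1 ≤ d)
    (χ : ℤ → ℂ) (hχ : ∀ n : ℤ, χ (n + (d : ℤ)) = χ n)
    (s : ℂ) (hs : 1 < s.re) :
    ((1 + q : ℝ) : ℂ) * ∑' n : ℕ, χ ((n : ℤ) + 1) * (-1) ^ (n + 1) *
        Complex.exp (s * ((n : ℂ) + 1) * (Real.log q : ℂ)) /
        Complex.exp (s * (Real.log ((1 - q ^ (n + 1)) / (1 - q)) : ℂ))
      = (((1 + q) / (1 + q ^ d) : ℝ) : ℂ) *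
        Complex.exp (-s * (Real.log ((1 - q ^ d) / (1 - q)) : ℂ)) *
        ∑ a ∈ Finset.Icc 1 d, χ (a : ℤ) * (-1) ^ a *
          Complex.exp (s * (a : ℂ) * (Real.log q : ℂ)) *
          (((1 + q ^ d : ℝ) : ℂ) * ∑' n : ℕ, (-1) ^ n *
            Complex.exp (s * (n : ℂ) * (Real.log (q ^ d) : ℂ)) /
            Complex.exp (s * (Real.log
              ((1 - (q ^ d) ^ ((n : ℝ) + (a : ℝ) / (d : ℝ))) / (1 - q ^ d)) : ℂ))) :=
  q_euler_L_series_general q hq0 hq1 d hd χ hχ s hs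
end

section
/- For 0 < q < 1 and m ≥ 1, as q → 1⁻ the q-Euler number E_{m,q} := [2]_q (1-q)^{-m} Σ_{j=0}^m binom(m,j)(-1)^j/(1+q^{j-m}) tends to the ordinary Euler number E_m (defined by 2/(e^t+1) = Σ E_m t^m/m!). -/
open Filter Topology Finset
open scoped fwdDiff Nat NNReal

/-!
Put `t = -log q` and `f x = 2 / (eˣ + 1)`. Since `q ^ (j - m) = e ^ ((m - j) t)`, reflecting
`j ↦ m - j` turns the sum into `Δ_t^m f(0) / 2`, the `m`-th forward difference of `f` with
step `t`. Expanding `f` in its Taylor series, `Δ_t^m f(0) = ∑ₖ (E_k / k!) (Δ_1^m xᵏ)(0) tᵏ`,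
and `(Δ_1^m xᵏ)(0)` vanishes for `k < m` and equals `m!` for `k = m`; hence
`Δ_t^m f(0) / t^m → E_m`. The remaining factors `(1 + q) / 2` and `(t / (1 - q))^m` tend to `1`.
-/

theorem hasFPowerSeriesOnBall_ofScalars_of_hasSum {c : ℕ → ℝ} {f : ℝ → ℝ} {r : ℝ}
    (hr : 0 < r) (hf : ∀ x : ℝ, |x| < r → HasSum (fun n => c n * x ^ n) (f x)) :
    HasFPowerSeriesOnBall f (FormalMultilinearSeries.ofScalars ℝ c) 0 (.ofReal r) where
  r_le := by
    refine le_of_forall_lt_imp_le_of_dense fun s hs => ?_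
    lift s to ℝ≥0 using hs.ne_top
    have hs' : |(s : ℝ)| < r := by simpa [ENNReal.coe_lt_ofReal] using hs
    refine FormalMultilinearSeries.le_radius_of_tendsto _ (l := 0) ?_
    simpa [FormalMultilinearSeries.ofScalars_norm] using
      (hf s hs').summable.tendsto_atTop_zero.norm
  r_pos := ENNReal.ofReal_pos.mpr hr
  hasSum {y} hy := by
    rw [Metric.eball_ofReal, mem_ball_zero_iff, Real.norm_eq_abs] at hy
    simpa [FormalMultilinearSeries.ofScalars_apply_eq, mul_comm] using hf y hy

theorem HasFPowerSeriesAt.tendsto_inv_pow_smul {𝕜 E : Type*} [NontriviallyNormedField 𝕜]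
    [NormedAddCommGroup E] [NormedSpace 𝕜 E] {f : 𝕜 → E} {p : FormalMultilinearSeries 𝕜 𝕜 E}
    {m : ℕ} (hf : HasFPowerSeriesAt f p 0) (hp : ∀ k < m, p.coeff k = 0) :
    Tendsto (fun x => (x ^ m)⁻¹ • f x) (𝓝[≠] 0) (𝓝 (p.coeff m)) := by
  have hval : ∀ k, (Function.swap dslope 0)^[k] f 0 = p.coeff k := fun k => by
    rw [← (hf.has_fpower_series_iterate_dslope_fslope k).coeff_zero 1,
      ← FormalMultilinearSeries.coeff, FormalMultilinearSeries.coeff_iterate_fslope, zero_add]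
  have hfactor (x : 𝕜) : x ^ m • (Function.swap dslope 0)^[m] f x = f x := by
    simpa using pow_sub_smul_iterate_dslope_of_zero m (fun k hk => (hval k).trans (hp k hk)) x
  have hcont := (hf.has_fpower_series_iterate_dslope_fslope m).continuousAt
  rw [ContinuousAt, hval] at hcont
  refine (hcont.mono_left nhdsWithin_le_nhds).congr' ?_
  filter_upwards [self_mem_nhdsWithin] with x hx
  rw [← hfactor x, smul_smul, inv_mul_cancel₀ (pow_ne_zero m hx), one_smul]

theorem hasSum_fwdDiff_iter_of_hasSum {a : ℕ → ℝ} {f : ℝ → ℝ} {r : ℝ}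
    (hf : ∀ x, |x| < r → HasSum (fun k => a k * x ^ k) (f x)) (m : ℕ) {t : ℝ}
    (ht : m * |t| < r) :
    HasSum (fun k => a k * (Δ_[1] ^[m] (fun x : ℝ => x ^ k)) 0 * t ^ k) (Δ_[t] ^[m] f 0) := by
  simp only [fwdDiff_iter_eq_sum_shift, zero_add]
  have hjt : ∀ j ∈ range (m + 1), |j • t| < r := fun j hj => by
    have : (j : ℝ) ≤ m := by exact_mod_cast Nat.lt_succ_iff.mp (mem_range.mp hj)
    rw [nsmul_eq_mul, abs_mul, Nat.abs_cast]
    nlinarith [abs_nonneg t]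
  convert hasSum_sum fun j hj => (hf _ (hjt j hj)).const_smul ((-1 : ℤ) ^ (m - j) * m.choose j)
    using 1
  ext k
  simp only [mul_sum, sum_mul, zsmul_eq_mul, nsmul_eq_mul, mul_pow]
  refine sum_congr rfl fun j _ => by ring

theorem tendsto_fwdDiff_iter_div_pow {a : ℕ → ℝ} {f : ℝ → ℝ} {r : ℝ} (hr : 0 < r)
    (hf : ∀ x, |x| < r → HasSum (fun k => a k * x ^ k) (f x)) (m : ℕ) :
    Tendsto (fun t => Δ_[t] ^[m] f 0 / t ^ m) (𝓝[≠] 0) (𝓝 (a m * m !)) := by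
  set b : ℕ → ℝ := fun k => a k * (Δ_[1] ^[m] (fun x : ℝ => x ^ k)) 0
  have hseries : HasFPowerSeriesOnBall (fun t => Δ_[t] ^[m] f 0)
      (FormalMultilinearSeries.ofScalars ℝ b) 0 (.ofReal (r / (m + 1))) := by
    refine hasFPowerSeriesOnBall_ofScalars_of_hasSum (by positivity) fun t ht => ?_
    refine hasSum_fwdDiff_iter_of_hasSum hf m ?_
    have ht' : |t| * (m + 1) < r := by
      rwa [← lt_div_iff₀ (by positivity)]
    nlinarith [abs_nonneg t]
  have hlow : ∀ k < m, (FormalMultilinearSeries.ofScalars ℝ b).coeff k = 0 := fun k hk => by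
    simp [b, FormalMultilinearSeries.coeff_ofScalars, fwdDiff_iter_pow_eq_zero_of_lt hk]
  simpa [b, FormalMultilinearSeries.coeff_ofScalars, fwdDiff_iter_eq_factorial, div_eq_inv_mul]
    using hseries.hasFPowerSeriesAt.tendsto_inv_pow_smul hlow

theorem sum_choose_div_one_add_rpow_eq_fwdDiff_iter (m : ℕ) {q : ℝ} (hq : 0 < q) :
    ∑ j ∈ range (m + 1), (m.choose j : ℝ) * (-1) ^ j / (1 + q ^ ((j : ℝ) - m)) =
      Δ_[-Real.log q] ^[m] (fun x => 2 / (Real.exp x + 1)) 0 / 2 := by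
  rw [fwdDiff_iter_eq_sum_shift, sum_div, ← sum_range_reflect]
  refine sum_congr rfl fun j hj => ?_
  have hjm : j ≤ m := Nat.lt_succ_iff.mp (mem_range.mp hj)
  rw [Nat.add_sub_cancel, Nat.choose_symm hjm, Nat.cast_sub hjm, Real.rpow_def_of_pos hq]
  have hexp : Real.log q * (m - j - m) = j * -Real.log q := by ring
  simp only [hexp, zsmul_eq_mul, nsmul_eq_mul, zero_add]
  push_cast
  ring

theorem tendsto_neg_log_div_one_sub :
    Tendsto (fun q => -Real.log q / (1 - q)) (𝓝[≠] 1) (𝓝 1) := by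
  have hd : HasDerivAt Real.log 1 1 := by simpa using Real.hasDerivAt_log one_ne_zero
  rw [hasDerivAt_iff_tendsto_slope] at hd
  refine hd.congr fun q => ?_
  rw [slope_def_field, Real.log_one, sub_zero, ← neg_sub, div_neg, neg_div]

theorem tendsto_neg_log_nhdsNE_zero :
    Tendsto (fun q => -Real.log q) (𝓝[Set.Ioo 0 1] (1 : ℝ)) (𝓝[≠] 0) := by
  refine tendsto_nhdsWithin_iff.mpr ⟨?_, ?_⟩
  · have : Tendsto (fun q => -Real.log q) (𝓝 1) (𝓝 0) := by
      simpa using (Real.continuousAt_log one_ne_zero).tendsto.neg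
    exact this.mono_left nhdsWithin_le_nhds
  · filter_upwards [self_mem_nhdsWithin] with q hq
    exact (neg_pos.mpr (Real.log_neg hq.1 hq.2)).ne'

theorem q_euler_number_tendsto_general (E : ℕ → ℝ)
    (hE : ∀ t : ℝ, |t| < 1 →
      HasSum (fun k : ℕ => E k * t ^ k / (k.factorial : ℝ)) (2 / (Real.exp t + 1)))
    (m : ℕ) :
    Tendsto (fun q : ℝ => (1 + q) / (1 - q) ^ m *
        ∑ j ∈ Finset.range (m + 1), (m.choose j : ℝ) * (-1) ^ j /
          (1 + q ^ ((j : ℝ) - (m : ℝ))))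
      (nhdsWithin 1 (Set.Ioo (0 : ℝ) 1)) (𝓝 (E m)) := by
  have hdiff : Tendsto (fun t => Δ_[t] ^[m] (fun x => 2 / (Real.exp x + 1)) 0 / t ^ m)
      (𝓝[≠] 0) (𝓝 (E m)) := by
    have := tendsto_fwdDiff_iter_div_pow one_pos (a := fun k => E k / k !)
      (fun x hx => by simpa only [div_mul_eq_mul_div, mul_right_comm] using hE x hx) m
    rwa [div_mul_cancel₀ _ (by positivity)] at this
  have hid : Tendsto id (𝓝[Set.Ioo 0 1] (1 : ℝ)) (𝓝[≠] 1) :=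
    tendsto_nhdsWithin_mono_left (fun q hq => hq.2.ne) tendsto_id
  have hhalf : Tendsto (fun q : ℝ => (1 + q) / 2) (𝓝 1) (𝓝 1) :=
    (by fun_prop : Continuous fun q : ℝ => (1 + q) / 2).tendsto' 1 1 (by norm_num)
  have hlim := (hhalf.mono_left nhdsWithin_le_nhds).mul
      ((tendsto_neg_log_div_one_sub.comp hid).pow m)
    |>.mul (hdiff.comp tendsto_neg_log_nhdsNE_zero)
  rw [one_pow, one_mul, one_mul] at hlim
  refine hlim.congr' ?_
  filter_upwards [self_mem_nhdsWithin] with q ⟨hq0, hq1⟩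
  have hlog : -Real.log q ≠ 0 := (neg_pos.mpr (Real.log_neg hq0 hq1)).ne'
  have hsub : 1 - q ≠ 0 := by linarith
  simp only [Function.comp_apply, id, div_pow,
    sum_choose_div_one_add_rpow_eq_fwdDiff_iter m hq0]
  field_simp

/-- For `m ≥ 1`, as `q → 1⁻` (within `(0,1)`) the q-Euler number
`E_{m,q} = [2]_q (1-q)^{-m} Σ_{j=0}^m C(m,j)(-1)^j/(1+q^{j-m})` tends to the
ordinary Euler number `E_m`, defined by `2/(e^t+1) = Σ E_m t^m/m!`. -/
theorem q_euler_number_tendsto (E : ℕ → ℝ)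
    (hE : ∀ t : ℝ, |t| < 1 →
      HasSum (fun k : ℕ => E k * t ^ k / (k.factorial : ℝ)) (2 / (Real.exp t + 1)))
    (m : ℕ) (hm : 1 ≤ m) :
    Tendsto (fun q : ℝ => (1 + q) / (1 - q) ^ m *
        ∑ j ∈ Finset.range (m + 1), (m.choose j : ℝ) * (-1) ^ j /
          (1 + q ^ ((j : ℝ) - (m : ℝ))))
      (nhdsWithin 1 (Set.Ioo (0 : ℝ) 1)) (𝓝 (E m)) :=
  q_euler_number_tendsto_general E hE m
end
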